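/- arXiv:1701.04479 — 5 statements merged into one kernel-verified Lean document; each statement's English description precedes it below -/
import Mathlib

section
/- For every real number c there is an isomorphism of ℝ-algebras ℝ[x,y]/(x², y³ + c·x·y²) ≅ ℝ[x,y]/(x², y³). -/
open MvPolynomial

noncomputable def phiHom (d : ℝ) : MvPolynomial (Fin 2) ℝ →ₐ[ℝ] MvPolynomial (Fin 2) ℝ :=
  aeval ![X 0, X 1 + C d * X 0]

noncomputable def phiEquiv (d : ℝ) : MvPolynomial (Fin 2) ℝ ≃ₐ[ℝ] MvPolynomial (Fin 2) ℝ :=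
  AlgEquiv.ofAlgHom (phiHom d) (phiHom (-d))
    (by apply algHom_ext; intro i; fin_cases i <;> simp [phiHom])
    (by apply algHom_ext; intro i; fin_cases i <;> simp [phiHom])

lemma span_pair_add {R : Type*} [CommRing R] (a b r : R) :
    Ideal.span {a, b + r * a} = Ideal.span {a, b} := by
  apply le_antisymm <;>
    rw [Ideal.span_le, Set.insert_subset_iff, Set.singleton_subset_iff] <;>
    refine ⟨Ideal.subset_span (Set.mem_insert _ _), ?_⟩
  · exact Ideal.add_mem _ (Ideal.subset_span (by simp))
      (Ideal.mul_mem_left _ r (Ideal.subset_span (by simp)))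
  · have hb : b = (b + r * a) + (-r) * a := by ring
    rw [hb]
    exact Ideal.add_mem _ (Ideal.subset_span (by simp))
      (Ideal.mul_mem_left _ _ (Ideal.subset_span (by simp)))

/-- For every real `c`, `ℝ[x,y]/(x², y³ + c·x·y²) ≅ ℝ[x,y]/(x², y³)` as ℝ-algebras. -/
theorem cp2_bundle_over_s2_cohomology_iso (c : ℝ) :
    Nonempty
      ((MvPolynomial (Fin 2) ℝ ⧸
          Ideal.span {(X 0 : MvPolynomial (Fin 2) ℝ) ^ 2,
            X 1 ^ 3 + C c * X 0 * X 1 ^ 2}) ≃ₐ[ℝ]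
        (MvPolynomial (Fin 2) ℝ ⧸
          Ideal.span {(X 0 : MvPolynomial (Fin 2) ℝ) ^ 2, X 1 ^ 3})) := by
  obtain ⟨d, rfl⟩ : ∃ d, c = 3 * d := ⟨c / 3, by ring⟩
  refine ⟨Ideal.quotientEquivAlg _ _ (phiEquiv (-d)) ?_⟩
  rw [Ideal.map_span, Set.image_insert_eq, Set.image_singleton]
  have h1 : (phiEquiv (-d)) ((X 0 : MvPolynomial (Fin 2) ℝ) ^ 2) = X 0 ^ 2 := by
    simp [phiEquiv, phiHom]
  have h2 : (phiEquiv (-d)) ((X 1 : MvPolynomial (Fin 2) ℝ) ^ 3 + C (3 * d) * X 0 * X 1 ^ 2)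
      = X 1 ^ 3 + (C (2 * d ^ 3) * X 0 - C (3 * d ^ 2) * X 1) * X 0 ^ 2 := by
    simp only [phiEquiv, phiHom, AlgEquiv.ofAlgHom_apply, map_add, map_mul, map_pow,
      aeval_X, aeval_C, Matrix.cons_val_zero, Matrix.cons_val_one, Matrix.head_cons,
      C_mul, C_pow, map_ofNat, map_neg, MvPolynomial.algebraMap_eq]
    ring
  simp only [RingHom.coe_coe, h1, h2]
  rw [span_pair_add]
end

section
/- Let V be a 6-dimensional real vector space, let η₁, η₂, ω be alternating 2-forms on V, and let q ∈ ℝ. If η₁ ∧ η₁ = 0, η₂ ∧ η₂ = 0, and ω ∧ ω + q·(η₁ ∧ η₂) = 0, then ω ∧ ω ∧ ω = 0. -/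
/-- The wedge product of a real-valued alternating `k`-form and a real-valued
alternating `l`-form, as a real-valued alternating `(k+l)`-form. -/
noncomputable def wedge {V : Type*} [AddCommGroup V] [Module ℝ V] {k l : ℕ}
    (ω : V [⋀^Fin k]→ₗ[ℝ] ℝ) (η : V [⋀^Fin l]→ₗ[ℝ] ℝ) :
    V [⋀^Fin (k + l)]→ₗ[ℝ] ℝ :=
  ((TensorProduct.lid ℝ ℝ).toLinearMap.compAlternatingMap
    (ω.domCoprod η)).domDomCongr finSumFinEquiv

/-!
A 2-form `η` with `η ∧ η = 0` satisfies the Plücker relations, so its radical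
`{v | ι_v η = 0}` has codimension at most 2. Hence the radical of `η₁ ∧ η₂`, and with it that of
`ω ∧ ω = -q η₁ ∧ η₂`, contains a subspace `K` of codimension at most 4. If `K` also lies in the
radical of `ω`, then `ω ∧ ω ∧ ω` is a 6-form that factors through the at most 4-dimensional
quotient `V ⧸ K`, so it vanishes. Otherwise some `v ∈ K` has `ι_v ω ≠ 0`, and
`ι_v (ω ∧ ω) = 2 ι_v ω ∧ ω = 0` forces `ω` to be decomposable, so that already `ω ∧ ω = 0`.
-/

open Equiv Equiv.Perm Nat Function LinearMap Module

namespace AlternatingMap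

variable {K M N W ι : Type*} [Field K] [AddCommGroup M] [Module K M] [AddCommGroup N] [Module K N]

def radical (f : M [⋀^ι]→ₗ[K] N) : Set M := {v | ∀ (x : ι → M) (i : ι), x i = v → f x = 0}

theorem eq_zero_of_ker_subset_radical [Fintype ι] [AddCommGroup W] [Module K W]
    [FiniteDimensional K W] (f : M [⋀^ι]→ₗ[K] N) (L : M →ₗ[K] W)
    (hL : finrank K W < Fintype.card ι) (hf : ↑(ker L) ⊆ f.radical) : f = 0 := by
  classical
  ext x
  obtain ⟨c, hc, i, hi⟩ := Fintype.not_linearIndependent_iff.1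
    fun h : LinearIndependent K (L ∘ x) => hL.not_ge h.fintype_card_le_finrank
  have h0 : f (update x i (∑ j, c j • x j)) = 0 :=
    hf (by simpa [map_sum] using hc) _ i (update_self _ _ _)
  rw [map_update_sum, Finset.sum_eq_single i (fun j _ hji => by
      rw [map_update_smul, map_update_self _ _ (Ne.symm hji), smul_zero])
      (fun h => absurd (Finset.mem_univ i) h), map_update_smul, update_eq_self] at h0
  exact (smul_eq_zero.1 h0).resolve_left hi

theorem apply_vecCons_swap (f : M [⋀^Fin 2]→ₗ[K] N) (u v : M) : f ![u, v] = -f ![v, u] := by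
  rw [← f.map_swap ![v, u] (i := 0) (j := 1) (by decide)]
  congr 1
  ext i; fin_cases i <;> rfl

theorem mem_radical_fin_two_iff (f : M [⋀^Fin 2]→ₗ[K] N) (v : M) :
    v ∈ f.radical ↔ ∀ z, f ![v, z] = 0 := by
  refine ⟨fun hv z => hv _ 0 rfl, fun hv x i hx => ?_⟩
  have hx' : x = ![x 0, x 1] := by ext j; fin_cases j <;> rfl
  fin_cases i
  · rw [hx', show x 0 = v from hx, hv]
  · rw [hx', show x 1 = v from hx, apply_vecCons_swap, hv, neg_zero]

theorem ofSubsingleton_symm_curryLeft_apply (f : M [⋀^Fin 2]→ₗ[K] N) (u v : M) :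
    (ofSubsingleton K M N (0 : Fin 1)).symm (f.curryLeft u) v = f ![u, v] := by
  change f (Matrix.vecCons u fun _ => v) = f ![u, v]
  congr 1
  ext i; fin_cases i <;> rfl

end AlternatingMap

section Wedge

variable {V : Type*} [AddCommGroup V] [Module ℝ V]

theorem factorial_smul_wedge_apply {k l : ℕ} (a : V [⋀^Fin k]→ₗ[ℝ] ℝ)
    (b : V [⋀^Fin l]→ₗ[ℝ] ℝ) (x : Fin (k + l) → V) :
    (k ! * l !) • wedge a b x = ∑ σ : Perm (Fin (k + l)),
      sign σ • (a (x ∘ σ ∘ Fin.castAdd l) * b (x ∘ σ ∘ Fin.natAdd k)) := by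
  have h := congrArg (fun F : V [⋀^Fin k ⊕ Fin l]→ₗ[ℝ] TensorProduct ℝ ℝ ℝ =>
    TensorProduct.lid ℝ ℝ (F (x ∘ finSumFinEquiv))) (MultilinearMap.domCoprod_alternization_eq a b)
  simp only [MultilinearMap.alternatization_apply, MultilinearMap.domDomCongr_apply,
    MultilinearMap.domCoprod_apply, AlternatingMap.coe_multilinearMap, map_sum, map_zsmul_unit,
    TensorProduct.lid_tmul, smul_eq_mul, AlternatingMap.smul_apply, map_nsmul,
    Fintype.card_fin] at h
  refine h.symm.trans (Fintype.sum_equiv finSumFinEquiv.permCongr _ _ fun σ => ?_)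
  simp [sign_permCongr, Function.comp_def, permCongr_apply]

theorem wedge_zero_left {k l : ℕ} (b : V [⋀^Fin l]→ₗ[ℝ] ℝ) :
    wedge (0 : V [⋀^Fin k]→ₗ[ℝ] ℝ) b = 0 := by
  simp only [wedge, ← AlternatingMap.domCoprod'_apply, TensorProduct.zero_tmul, map_zero,
    compAlternatingMap_zero, AlternatingMap.domDomCongr_zero]

theorem wedge_radical {k l : ℕ} (a : V [⋀^Fin k]→ₗ[ℝ] ℝ) (b : V [⋀^Fin l]→ₗ[ℝ] ℝ) :
    a.radical ∩ b.radical ⊆ (wedge a b).radical := by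
  rintro v ⟨ha, hb⟩ x j hj
  have hsum : ∑ σ : Perm (Fin (k + l)),
      sign σ • (a (x ∘ σ ∘ Fin.castAdd l) * b (x ∘ σ ∘ Fin.natAdd k)) = 0 := by
    refine Finset.sum_eq_zero fun σ _ => ?_
    induction h : σ.symm j using Fin.addCases with
    | left p => rw [ha _ p (by simp [← h, hj]), zero_mul, smul_zero]
    | right p => rw [hb _ p (by simp [← h, hj]), mul_zero, smul_zero]
  rw [← factorial_smul_wedge_apply, smul_eq_zero] at hsum
  exact hsum.resolve_left (by positivity)

theorem wedge_apply_fin_four (a b : V [⋀^Fin 2]→ₗ[ℝ] ℝ) (x : Fin 4 → V) :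
    wedge a b x =
      a ![x 0, x 1] * b ![x 2, x 3] - a ![x 0, x 2] * b ![x 1, x 3]
        + a ![x 0, x 3] * b ![x 1, x 2] + a ![x 1, x 2] * b ![x 0, x 3]
        - a ![x 1, x 3] * b ![x 0, x 2] + a ![x 2, x 3] * b ![x 0, x 1] := by
  have h := factorial_smul_wedge_apply a b x
  have hσ : ∀ σ : Perm (Fin (2 + 2)), a (x ∘ σ ∘ Fin.castAdd 2) * b (x ∘ σ ∘ Fin.natAdd 2) =
      a ![x (σ 0), x (σ 1)] * b ![x (σ 2), x (σ 3)] := fun σ => by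
    congr 2 <;> ext i <;> fin_cases i <;> rfl
  -- `simp` does not recognise the numerals `2` and `3` as successors.
  have h2 : ∀ {n} (p : Fin (n + 3)) (e : Perm (Fin (n + 2))),
      decomposeFin.symm (p, e) 2 = swap 0 p (e 1).succ :=
    fun p e => decomposeFin_symm_apply_succ e p 1
  have h3 : ∀ (p : Fin 4) (e : Perm (Fin 3)), decomposeFin.symm (p, e) 3 = swap 0 p (e 2).succ :=
    fun p e => decomposeFin_symm_apply_succ e p 2
  have hswap : ∀ (f : V [⋀^Fin 2]→ₗ[ℝ] ℝ) {i j : Fin 4}, j < i →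
      f ![x i, x j] = -f ![x j, x i] :=
    fun f _ _ _ => f.apply_vecCons_swap _ _
  simp only [hσ, Finset.univ_perm_fin_succ, Finset.sum_map, Fintype.sum_prod_type,
    Fin.sum_univ_succ, Finset.univ_unique, Finset.sum_singleton] at h
  simp only [factorial_two, reduceMul, reduceAdd, nsmul_eq_mul, cast_ofNat, succ_eq_add_one,
    Fin.isValue, default_eq, Embedding.coeFn_mk, decomposeFin_symm_of_one, swap_self,
    decomposeFin_symm_of_refl, sign_refl, refl_apply, one_smul, Fin.default_eq_zero,
    Fin.succ_zero_eq_one, decomposeFin.symm_sign, ↓reduceIte, sign_swap', zero_ne_one, mul_neg,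
    mul_one, decomposeFin_symm_apply_zero, decomposeFin_symm_apply_one, h2, swap_apply_left,
    Fin.succ_one_eq_two, Fin.reduceSucc, h3, swap_apply_right, Units.neg_smul, swap_apply_def,
    Fin.reduceEq, one_ne_zero, neg_neg] at h
  simp only [hswap a, hswap b, Fin.reduceLT] at h
  linarith

theorem wedge_self_apply_fin_four (f : V [⋀^Fin 2]→ₗ[ℝ] ℝ) (x : Fin 4 → V) :
    wedge f f x = 2 * (f ![x 0, x 1] * f ![x 2, x 3] - f ![x 0, x 2] * f ![x 1, x 3]
      + f ![x 0, x 3] * f ![x 1, x 2]) := by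
  rw [wedge_apply_fin_four]
  ring

theorem wedge_self_eq_zero_iff (f : V [⋀^Fin 2]→ₗ[ℝ] ℝ) :
    wedge f f = 0 ↔ ∀ u w y z : V,
      f ![u, w] * f ![y, z] - f ![u, y] * f ![w, z] + f ![u, z] * f ![w, y] = 0 := by
  refine ⟨fun h u w y z => ?_, fun h => ?_⟩
  · have := wedge_self_apply_fin_four f ![u, w, y, z]
    rw [h, AlternatingMap.zero_apply] at this
    simpa only [Fin.isValue, Matrix.cons_val_zero, Matrix.cons_val_one, Matrix.cons_val,
      zero_eq_mul, OfNat.ofNat_ne_zero, false_or] using this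
  · ext x
    rw [wedge_self_apply_fin_four, h, mul_zero, AlternatingMap.zero_apply]

theorem exists_ker_subset_radical_of_wedge_self_eq_zero (f : V [⋀^Fin 2]→ₗ[ℝ] ℝ)
    (hf : wedge f f = 0) : ∃ L : V →ₗ[ℝ] Fin 2 → ℝ, ↑(ker L) ⊆ f.radical := by
  by_cases hne : ∃ u w, f ![u, w] ≠ 0
  · obtain ⟨u, w, huw⟩ := hne
    let ev : V → V →ₗ[ℝ] ℝ :=
      fun u => (AlternatingMap.ofSubsingleton ℝ V ℝ 0).symm (f.curryLeft u)
    refine ⟨LinearMap.pi ![ev u, ev w], fun v hv => (f.mem_radical_fin_two_iff v).2 fun z => ?_⟩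
    have huv : f ![u, v] = 0 := by
      rw [← f.ofSubsingleton_symm_curryLeft_apply]; exact congrFun hv 0
    have hwv : f ![w, v] = 0 := by
      rw [← f.ofSubsingleton_symm_curryLeft_apply]; exact congrFun hv 1
    have hplucker := (wedge_self_eq_zero_iff f).1 hf u w v z
    rw [huv, hwv] at hplucker
    simpa [huw] using hplucker
  · push Not at hne
    exact ⟨0, fun v _ => (f.mem_radical_fin_two_iff v).2 (hne v)⟩

theorem wedge_self_eq_zero_of_mem_radical (f : V [⋀^Fin 2]→ₗ[ℝ] ℝ) {v : V}
    (hv : v ∈ (wedge f f).radical) (hvf : v ∉ f.radical) : wedge f f = 0 := by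
  obtain ⟨w, hw⟩ := not_forall.1 (mt (f.mem_radical_fin_two_iff v).2 hvf)
  have hdecomp : ∀ y z,
      f ![y, z] = (f ![v, y] * f ![w, z] - f ![v, z] * f ![w, y]) / f ![v, w] := by
    intro y z
    have h := wedge_self_apply_fin_four f ![v, w, y, z]
    rw [hv _ 0 rfl] at h
    simp only [Fin.isValue, Matrix.cons_val_zero, Matrix.cons_val_one, Matrix.cons_val,
      zero_eq_mul, OfNat.ofNat_ne_zero, false_or] at h
    rw [eq_div_iff hw]
    linarith
  rw [wedge_self_eq_zero_iff]
  intro u w' y z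
  rw [hdecomp u w', hdecomp y z, hdecomp u y, hdecomp w' z, hdecomp u z, hdecomp w' y]
  field_simp
  ring

end Wedge

theorem omega_cube_eq_zero_general
    (V : Type*) [AddCommGroup V] [Module ℝ V] (η₁ η₂ ω : V [⋀^Fin 2]→ₗ[ℝ] ℝ) (q : ℝ)
    (h₁ : wedge η₁ η₁ = 0) (h₂ : wedge η₂ η₂ = 0)
    (hω : wedge ω ω + q • wedge η₁ η₂ = 0) :
    wedge (wedge ω ω) ω = 0 := by
  obtain ⟨L₁, hL₁⟩ := exists_ker_subset_radical_of_wedge_self_eq_zero η₁ h₁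
  obtain ⟨L₂, hL₂⟩ := exists_ker_subset_radical_of_wedge_self_eq_zero η₂ h₂
  have hη : ↑(ker (L₁.prod L₂)) ⊆ (wedge η₁ η₂).radical := by
    rw [ker_prod, Submodule.coe_inf]
    exact (Set.inter_subset_inter hL₁ hL₂).trans (wedge_radical η₁ η₂)
  have hω₂ : ↑(ker (L₁.prod L₂)) ⊆ (wedge ω ω).radical := fun v hv x i hx => by
    simpa only [reduceAdd, AlternatingMap.add_apply, AlternatingMap.smul_apply, hη hv x i hx,
      smul_eq_mul, mul_zero, add_zero, AlternatingMap.zero_apply] using congrArg (· x) hω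
  by_cases hω₁ : ↑(ker (L₁.prod L₂)) ⊆ ω.radical
  · refine AlternatingMap.eq_zero_of_ker_subset_radical _ (L₁.prod L₂) (by simp) ?_
    exact (Set.subset_inter hω₂ hω₁).trans (wedge_radical _ _)
  · obtain ⟨v, hvK, hvω⟩ := Set.not_subset.1 hω₁
    rw [wedge_self_eq_zero_of_mem_radical ω (hω₂ hvK) hvω, wedge_zero_left]

/-- If alternating 2-forms `η₁`, `η₂`, `ω` on a 6-dimensional real vector space satisfy
`η₁ ∧ η₁ = 0`, `η₂ ∧ η₂ = 0` and `ω ∧ ω + q·(η₁ ∧ η₂) = 0`, then `ω ∧ ω ∧ ω = 0`. -/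
theorem omega_cube_eq_zero
    (V : Type*) [AddCommGroup V] [Module ℝ V] [FiniteDimensional ℝ V]
    (hV : Module.finrank ℝ V = 6) (η₁ η₂ ω : V [⋀^Fin 2]→ₗ[ℝ] ℝ) (q : ℝ)
    (h₁ : wedge η₁ η₁ = 0) (h₂ : wedge η₂ η₂ = 0)
    (hω : wedge ω ω + q • wedge η₁ η₂ = 0) :
    wedge (wedge ω ω) ω = 0 :=
  omega_cube_eq_zero_general V η₁ η₂ ω q h₁ h₂ hω
end

section
/- Let V be a 6-dimensional real vector space, let γ be an alternating 2-form on V, and let W ⊆ V be a 4-dimensional subspace such that γ(w, w′) = 0 for all w, w′ ∈ W. Then γ ∧ γ ∧ γ = 0. -/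
theorem Nat.card_subtype_eq_add_of_equiv_sum {α β γ : Type*} [Finite α] [Finite β]
    (e : α ⊕ β ≃ γ) (p : γ → Prop) :
    Nat.card {c // p c} =
      Nat.card {a // p (e (Sum.inl a))} + Nat.card {b // p (e (Sum.inr b))} := by
  rw [← Nat.card_sum]
  exact Nat.card_congr <|
    (e.symm.subtypeEquiv fun c => by rw [e.apply_symm_apply]).trans
      (Equiv.subtypeSum (p := fun d => p (e d)))

section

variable {V : Type*} [AddCommGroup V] [Module ℝ V]

def VanishesIfFewOutside (W : Submodule ℝ V) (r : ℕ) {ι : Type*}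
    (ω : V [⋀^ι]→ₗ[ℝ] ℝ) : Prop :=
  ∀ x : ι → V, Nat.card {i // x i ∉ W} < r → ω x = 0

theorem wedge_apply_eq_zero_of_forall_perm {k l : ℕ}
    (ω : V [⋀^Fin k]→ₗ[ℝ] ℝ) (η : V [⋀^Fin l]→ₗ[ℝ] ℝ) (x : Fin (k + l) → V)
    (h : ∀ σ : Equiv.Perm (Fin k ⊕ Fin l),
      ω (fun i => x (finSumFinEquiv (σ (Sum.inl i)))) = 0 ∨
      η (fun i => x (finSumFinEquiv (σ (Sum.inr i)))) = 0) :
    wedge ω η x = 0 := by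
  rw [wedge, AlternatingMap.domDomCongr_apply, LinearMap.compAlternatingMap_apply,
    AlternatingMap.domCoprod_apply, _root_.sum_apply, map_sum]
  refine Finset.sum_eq_zero fun σ _ => ?_
  induction σ using Quotient.inductionOn' with
  | h σ =>
    rw [AlternatingMap.domCoprod.summand_mk'', _root_.smul_apply,
      MultilinearMap.domDomCongr_apply, MultilinearMap.domCoprod_apply]
    rcases h σ with h0 | h0 <;>
      simp only [Function.comp_apply, AlternatingMap.coe_multilinearMap, h0,
        TensorProduct.zero_tmul, TensorProduct.tmul_zero, map_zero, smul_zero]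

theorem VanishesIfFewOutside.wedge {W : Submodule ℝ V} {r s k l : ℕ}
    {ω : V [⋀^Fin k]→ₗ[ℝ] ℝ} {η : V [⋀^Fin l]→ₗ[ℝ] ℝ}
    (hω : VanishesIfFewOutside W r ω) (hη : VanishesIfFewOutside W s η) :
    VanishesIfFewOutside W (r + s) (wedge ω η) := by
  intro x hx
  refine wedge_apply_eq_zero_of_forall_perm ω η x fun σ => ?_
  rw [Nat.card_subtype_eq_add_of_equiv_sum (σ.trans finSumFinEquiv)] at hx
  by_cases hr : Nat.card {i // x (finSumFinEquiv (σ (Sum.inl i))) ∉ W} < r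
  · exact .inl (hω _ hr)
  · exact .inr (hη _ (by simp only [Equiv.trans_apply] at hx; omega))

theorem vanishesIfFewOutside_one_of_isotropic (γ : V [⋀^Fin 2]→ₗ[ℝ] ℝ) (W : Submodule ℝ V)
    (hiso : ∀ w ∈ W, ∀ w' ∈ W, γ ![w, w'] = 0) : VanishesIfFewOutside W 1 γ := by
  intro x hx
  have hxW : ∀ i, x i ∈ W := by
    rw [Nat.lt_one_iff, Finite.card_eq_zero_iff, isEmpty_subtype] at hx
    simpa using hx
  rw [show x = ![x 0, x 1] by ext i; fin_cases i <;> rfl]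
  exact hiso _ (hxW 0) _ (hxW 1)

theorem VanishesIfFewOutside.eq_zero [FiniteDimensional ℝ V] {W : Submodule ℝ V} {r : ℕ}
    {ι : Type*} [Finite ι] {ω : V [⋀^ι]→ₗ[ℝ] ℝ} (hω : VanishesIfFewOutside W r ω)
    (hr : Module.finrank ℝ V < Module.finrank ℝ W + r) : ω = 0 := by
  obtain ⟨U, hU⟩ := Submodule.exists_isCompl W
  have hUW := Submodule.finrank_add_eq_of_isCompl hU
  let e := ((Module.finBasis ℝ W).prod (Module.finBasis ℝ U)).map
    (Submodule.prodEquivOfIsCompl W U hU)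
  have he : ∀ j, e (Sum.inl j) ∈ W := by
    intro j
    simp [e, Module.Basis.prod_apply, Submodule.coe_prodEquivOfIsCompl']
  refine Module.Basis.ext_alternating e fun v hv => hω _ ?_
  have hright : ∀ i, e (v i) ∉ W → (v i).isRight := by
    intro i hi
    cases hvi : v i with
    | inl j => exact absurd (hvi ▸ he j) hi
    | inr j => rfl
  calc Nat.card {i // e (v i) ∉ W}
      ≤ Nat.card {c // Sum.isRight c} :=
        Nat.card_le_card_of_injective (fun i => ⟨v i.1, hright i.1 i.2⟩)
          fun i j h => Subtype.ext (hv (congrArg Subtype.val h))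
    _ = Module.finrank ℝ U := by rw [Nat.card_congr Equiv.sumIsRight, Nat.card_fin]
    _ < r := by omega

end

/-- An alternating 2-form `γ` on a 6-dimensional real vector space admitting a
4-dimensional totally isotropic subspace satisfies `γ ∧ γ ∧ γ = 0`. -/
theorem gamma_cube_eq_zero_of_isotropic
    (V : Type*) [AddCommGroup V] [Module ℝ V] [FiniteDimensional ℝ V]
    (hV : Module.finrank ℝ V = 6) (γ : V [⋀^Fin 2]→ₗ[ℝ] ℝ)
    (W : Submodule ℝ V) (hW : Module.finrank ℝ W = 4)
    (hiso : ∀ w ∈ W, ∀ w' ∈ W, γ ![w, w'] = 0) :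
    wedge (wedge γ γ) γ = 0 := by
  have hγ := vanishesIfFewOutside_one_of_isotropic γ W hiso
  exact ((hγ.wedge hγ).wedge hγ).eq_zero (by omega)
end

section
/- Let a, b, c be real numbers with a·b = 2c. Then there is an isomorphism of ℝ-algebras ℝ[x₁,x₂,y]/(x₁², x₂², y² + (a·x₁ + b·x₂)·y + c·x₁·x₂) ≅ ℝ[u₁,u₂,u₃]/(u₁², u₂², u₃²). -/
/-!
Completing the square: the substitution `y ↦ y - (a/2)·x₁ - (b/2)·x₂` turns the third relation into
`y² - (a/2)²·x₁² - (b/2)²·x₂² + (c - ab/2)·x₁x₂`. When `ab = 2c` the mixed term vanishes, and the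
remaining correction lies in `(x₁², x₂²)`, so the substitution carries one ideal onto the other.
-/

open MvPolynomial

theorem Ideal.span_triple_le_of_sub_mem {R : Type*} [CommRing R] {p q r s : R}
    (h : r - s ∈ Ideal.span {p, q}) : Ideal.span {p, q, r} ≤ Ideal.span {p, q, s} := by
  have hpq : Ideal.span {p, q} ≤ Ideal.span {p, q, s} :=
    Ideal.span_mono (by simp [Set.insert_subset_iff])
  rw [Ideal.span_le, Set.insert_subset_iff, Set.insert_subset_iff, Set.singleton_subset_iff]
  refine ⟨Ideal.subset_span (by simp), Ideal.subset_span (by simp), ?_⟩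
  simpa using add_mem (hpq h) (Ideal.subset_span (by simp) : s ∈ Ideal.span {p, q, s})

theorem Ideal.span_triple_eq_of_sub_mem {R : Type*} [CommRing R] {p q r s : R}
    (h : r - s ∈ Ideal.span {p, q}) : Ideal.span {p, q, r} = Ideal.span {p, q, s} :=
  le_antisymm (Ideal.span_triple_le_of_sub_mem h)
    (Ideal.span_triple_le_of_sub_mem (by rwa [← neg_sub, neg_mem_iff]))

namespace MvPolynomial

variable {R : Type*} [CommRing R]

noncomputable def shearX₂ (s t : R) : MvPolynomial (Fin 3) R ≃ₐ[R] MvPolynomial (Fin 3) R :=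
  AlgEquiv.ofAlgHom (aeval ![X 0, X 1, X 2 + C s * X 0 + C t * X 1])
    (aeval ![X 0, X 1, X 2 - C s * X 0 - C t * X 1])
    (by ext i; fin_cases i <;> simp; ring)
    (by ext i; fin_cases i <;> simp; ring)

theorem shearX₂_apply (s t : R) (p : MvPolynomial (Fin 3) R) :
    shearX₂ s t p = aeval ![X 0, X 1, X 2 + C s * X 0 + C t * X 1] p := rfl

@[simp] theorem shearX₂_X_zero (s t : R) : shearX₂ s t (X 0) = X 0 := by simp [shearX₂_apply]

@[simp] theorem shearX₂_X_one (s t : R) : shearX₂ s t (X 1) = X 1 := by simp [shearX₂_apply]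

theorem shearX₂_complete_square {K : Type*} [Field K] [NeZero (2 : K)] (a b c : K) :
    shearX₂ (-(a / 2)) (-(b / 2))
        ((X 2 : MvPolynomial (Fin 3) K) ^ 2 + (C a * X 0 + C b * X 1) * X 2 + C c * (X 0 * X 1)) =
      X 2 ^ 2 - C (a / 2) ^ 2 * X 0 ^ 2 - C (b / 2) ^ 2 * X 1 ^ 2
        + C (c - a * b / 2) * (X 0 * X 1) := by
  have two : (C (2 : K) : MvPolynomial (Fin 3) K) = 2 := map_ofNat C 2
  have ha : (C a : MvPolynomial (Fin 3) K) = 2 * C (a / 2) := by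
    rw [← two, ← map_mul, mul_div_cancel₀ _ two_ne_zero]
  have hb : (C b : MvPolynomial (Fin 3) K) = 2 * C (b / 2) := by
    rw [← two, ← map_mul, mul_div_cancel₀ _ two_ne_zero]
  have hab : (C (c - a * b / 2) : MvPolynomial (Fin 3) K) = C c - 2 * C (a / 2) * C (b / 2) := by
    rw [← two, ← map_mul, ← map_mul, ← map_sub]; congr 1; field_simp
  simp only [shearX₂_apply, map_add, map_mul, map_pow, aeval_X, aeval_C, algebraMap_eq, map_neg,
    Matrix.cons_val]
  rw [ha, hb, hab]
  ring

end MvPolynomial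

/-- If `ab = 2c`, then
`ℝ[x₁,x₂,y]/(x₁², x₂², y² + (a·x₁ + b·x₂)·y + c·x₁·x₂) ≅ ℝ[u₁,u₂,u₃]/(u₁², u₂², u₃²)`
as ℝ-algebras. -/
theorem s2_bundle_over_s2_times_s2_cohomology_iso (a b c : ℝ) (h : a * b = 2 * c) :
    Nonempty
      ((MvPolynomial (Fin 3) ℝ ⧸
          Ideal.span {(X 0 : MvPolynomial (Fin 3) ℝ) ^ 2, X 1 ^ 2,
            X 2 ^ 2 + (C a * X 0 + C b * X 1) * X 2 + C c * (X 0 * X 1)}) ≃ₐ[ℝ]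
        (MvPolynomial (Fin 3) ℝ ⧸
          Ideal.span {(X 0 : MvPolynomial (Fin 3) ℝ) ^ 2, X 1 ^ 2, X 2 ^ 2})) := by
  refine ⟨Ideal.quotientEquivAlg _ _ (shearX₂ (-(a / 2)) (-(b / 2))) ?_⟩
  have hq : c - a * b / 2 = 0 := by linarith
  rw [Ideal.map_span, Set.image_insert_eq, Set.image_insert_eq, Set.image_singleton]
  simp only [RingHom.coe_coe, map_pow, shearX₂_X_zero, shearX₂_X_one, shearX₂_complete_square, hq,
    map_zero, zero_mul, add_zero]
  exact Ideal.span_triple_eq_of_sub_mem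
    (Ideal.mem_span_pair.2 ⟨C (a / 2) ^ 2, C (b / 2) ^ 2, by ring⟩)
end

section
/- Let a, b, c be real numbers with a² − b² = 4c. Then there is an isomorphism of ℝ-algebras ℝ[x₁,x₂,y]/(x₁·x₂, x₁² + x₂², y² + (a·x₁ + b·x₂)·y + c·x₁²) ≅ ℝ[u₁,u₂,u₃]/(u₁², u₂², u₃²). -/
open MvPolynomial

/-!
Substitute `u₁ = x₁ + x₂`, `u₂ = x₁ - x₂` and, completing the square, `u₃ = 2y + a x₁ + b x₂`;
the substitution is invertible as soon as `2` is. Then `u₁², u₂²` generate the same ideal as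
`x₁x₂, x₁² + x₂²`, while
`u₃² = 4(y² + (a x₁ + b x₂) y + c x₁²) + (a² - b² - 4c) x₁² + 2ab x₁x₂ + b²(x₁² + x₂²)`,
so for `a² - b² = 4c` the substitution carries `(u₁², u₂², u₃²)` onto the relation ideal.
-/

theorem Ideal.mem_span_triple_of_eq {α : Type*} [CommSemiring α] {x y z w : α} (p q r : α)
    (h : w = p * x + q * y + r * z) : w ∈ Ideal.span {x, y, z} :=
  Ideal.mem_span_insert.2
    ⟨p, q * y + r * z, Ideal.mem_span_pair.2 ⟨q, r, rfl⟩, by rw [h, add_assoc]⟩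

namespace S2BundleCohomology

variable {R : Type*} [CommRing R]

noncomputable def bundleIdeal (a b c : R) : Ideal (MvPolynomial (Fin 3) R) :=
  Ideal.span {X 0 * X 1, X 0 ^ 2 + X 1 ^ 2, X 2 ^ 2 + (C a * X 0 + C b * X 1) * X 2 + C c * X 0 ^ 2}

noncomputable def squaresIdeal : Ideal (MvPolynomial (Fin 3) R) :=
  Ideal.span {X 0 ^ 2, X 1 ^ 2, X 2 ^ 2}

noncomputable def substitution (a b : R) : MvPolynomial (Fin 3) R →ₐ[R] MvPolynomial (Fin 3) R :=
  aeval ![X 0 + X 1, X 0 - X 1, 2 * X 2 + C a * X 0 + C b * X 1]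

theorem map_squaresIdeal_le_bundleIdeal {a b c : R} (h : a ^ 2 - b ^ 2 = 4 * c) :
    squaresIdeal.map (substitution a b) ≤ bundleIdeal a b c := by
  have hC : (C a ^ 2 - C b ^ 2 : MvPolynomial (Fin 3) R) = 4 * C c := by
    rw [← map_ofNat C 4, ← C_pow, ← C_pow, ← C_sub, ← C_mul, h]
  rw [squaresIdeal, bundleIdeal, Ideal.map_span, Ideal.span_le]
  simp only [Set.image_insert_eq, Set.image_singleton, Set.insert_subset_iff,
    Set.singleton_subset_iff, SetLike.mem_coe, map_pow, substitution, aeval_X, Fin.isValue,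
    Matrix.cons_val_zero, Matrix.cons_val_one, Matrix.cons_val]
  exact ⟨Ideal.mem_span_triple_of_eq 2 1 0 (by ring),
    Ideal.mem_span_triple_of_eq (-2) 1 0 (by ring),
    Ideal.mem_span_triple_of_eq (2 * C a * C b) (C b ^ 2) 4 (by linear_combination X 0 ^ 2 * hC)⟩

variable [Invertible (2 : R)]

noncomputable def inverseSubstitution (a b : R) :
    MvPolynomial (Fin 3) R →ₐ[R] MvPolynomial (Fin 3) R :=
  aeval ![C ⅟2 * (X 0 + X 1), C ⅟2 * (X 0 - X 1),
    C ⅟2 * (X 2 - C a * C ⅟2 * (X 0 + X 1) - C b * C ⅟2 * (X 0 - X 1))]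

theorem C_invOf_two_mul_two {σ : Type*} : (C (⅟2 : R) : MvPolynomial σ R) * 2 = 1 := by
  rw [← map_ofNat C 2, ← C_mul, invOf_mul_self, C_1]

theorem substitution_comp_inverseSubstitution (a b : R) :
    (substitution a b).comp (inverseSubstitution a b) = AlgHom.id R _ := by
  have h2 : (C (⅟2 : R) : MvPolynomial (Fin 3) R) * 2 = 1 := C_invOf_two_mul_two
  refine algHom_ext fun i => ?_
  fin_cases i <;>
    simp only [substitution, inverseSubstitution, AlgHom.comp_apply, AlgHom.id_apply, aeval_X,
      Fin.isValue, Fin.zero_eta, Fin.mk_one, Fin.reduceFinMk, Matrix.cons_val, Matrix.cons_val_zero,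
      Matrix.cons_val_one, map_add, map_sub, map_mul, algHom_C, algebraMap_eq]
  · linear_combination X 0 * h2
  · linear_combination X 1 * h2
  · linear_combination (X 2 - C (⅟2 : R) * (C a * X 0 + C b * X 1)) * h2

theorem inverseSubstitution_comp_substitution (a b : R) :
    (inverseSubstitution a b).comp (substitution a b) = AlgHom.id R _ := by
  have h2 : (C (⅟2 : R) : MvPolynomial (Fin 3) R) * 2 = 1 := C_invOf_two_mul_two
  refine algHom_ext fun i => ?_
  fin_cases i <;>
    simp only [substitution, inverseSubstitution, AlgHom.comp_apply, AlgHom.id_apply, aeval_X,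
      Fin.isValue, Fin.zero_eta, Fin.mk_one, Fin.reduceFinMk, Matrix.cons_val, Matrix.cons_val_zero,
      Matrix.cons_val_one, map_add, map_sub, map_mul, aeval_ofNat, algHom_C, algebraMap_eq]
  · linear_combination X 0 * h2
  · linear_combination X 1 * h2
  · linear_combination (X 2 - C (⅟2 : R) * (C a * (X 0 + X 1) + C b * (X 0 - X 1))) * h2

noncomputable def changeOfVariables (a b : R) :
    MvPolynomial (Fin 3) R ≃ₐ[R] MvPolynomial (Fin 3) R :=
  AlgEquiv.ofAlgHom (substitution a b) (inverseSubstitution a b)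
    (substitution_comp_inverseSubstitution a b) (inverseSubstitution_comp_substitution a b)

theorem bundleIdeal_le_map_squaresIdeal {a b c : R} (h : a ^ 2 - b ^ 2 = 4 * c) :
    bundleIdeal a b c ≤ squaresIdeal.map (substitution a b) := by
  have hC : (C a ^ 2 - C b ^ 2 : MvPolynomial (Fin 3) R) = 4 * C c := by
    rw [← map_ofNat C 4, ← C_pow, ← C_pow, ← C_sub, ← C_mul, h]
  have h2 : (C (⅟2 : R) : MvPolynomial (Fin 3) R) * 2 = 1 := C_invOf_two_mul_two
  set t : MvPolynomial (Fin 3) R := C ⅟2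
  rw [squaresIdeal, bundleIdeal, Ideal.map_span, Ideal.span_le]
  simp only [Set.image_insert_eq, Set.image_singleton, Set.insert_subset_iff,
    Set.singleton_subset_iff, SetLike.mem_coe, map_pow, substitution, aeval_X, Fin.isValue,
    Matrix.cons_val_zero, Matrix.cons_val_one, Matrix.cons_val]
  exact ⟨Ideal.mem_span_triple_of_eq (t ^ 2) (-t ^ 2) 0
      (by linear_combination (-(2 * t + 1) * (X 0 * X 1)) * h2),
    Ideal.mem_span_triple_of_eq t t 0 (by linear_combination (-(X 0 ^ 2 + X 1 ^ 2)) * h2),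
    Ideal.mem_span_triple_of_eq (-t ^ 3 * (C a * C b + C b ^ 2)) (t ^ 3 * (C a * C b - C b ^ 2))
      (t ^ 2)
      (by
        linear_combination
          (t ^ 2 * (2 * C a * C b * X 0 * X 1 + C b ^ 2 * (X 0 ^ 2 + X 1 ^ 2)) -
            (2 * t + 1) * (X 2 ^ 2 + (C a * X 0 + C b * X 1) * X 2 + C c * X 0 ^ 2)) * h2 -
          t ^ 2 * X 0 ^ 2 * hC)⟩

theorem bundleIdeal_eq_map_squaresIdeal {a b c : R} (h : a ^ 2 - b ^ 2 = 4 * c) :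
    bundleIdeal a b c =
      squaresIdeal.map
        (changeOfVariables a b : MvPolynomial (Fin 3) R →+* MvPolynomial (Fin 3) R) :=
  (bundleIdeal_le_map_squaresIdeal h).antisymm (map_squaresIdeal_le_bundleIdeal h)

noncomputable def bundleQuotientEquiv {a b c : R} (h : a ^ 2 - b ^ 2 = 4 * c) :
    (MvPolynomial (Fin 3) R ⧸ bundleIdeal a b c) ≃ₐ[R] MvPolynomial (Fin 3) R ⧸ squaresIdeal :=
  (Ideal.quotientEquivAlg _ _ (changeOfVariables a b) (bundleIdeal_eq_map_squaresIdeal h)).symm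

end S2BundleCohomology

/-- If `a² − b² = 4c`, then
`ℝ[x₁,x₂,y]/(x₁·x₂, x₁² + x₂², y² + (a·x₁ + b·x₂)·y + c·x₁²) ≅ ℝ[u₁,u₂,u₃]/(u₁², u₂², u₃²)`
as ℝ-algebras. -/
theorem s2_bundle_over_cp2_connsum_conj_cp2_cohomology_iso (a b c : ℝ)
    (h : a ^ 2 - b ^ 2 = 4 * c) :
    Nonempty
      ((MvPolynomial (Fin 3) ℝ ⧸
          Ideal.span {(X 0 : MvPolynomial (Fin 3) ℝ) * X 1, X 0 ^ 2 + X 1 ^ 2,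
            X 2 ^ 2 + (C a * X 0 + C b * X 1) * X 2 + C c * X 0 ^ 2}) ≃ₐ[ℝ]
        (MvPolynomial (Fin 3) ℝ ⧸
          Ideal.span {(X 0 : MvPolynomial (Fin 3) ℝ) ^ 2, X 1 ^ 2, X 2 ^ 2})) :=
  ⟨S2BundleCohomology.bundleQuotientEquiv h⟩
end
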